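/- arXiv:0902.1178 — 5 statements merged into one kernel-verified Lean document; each statement's English description precedes it below -/
import Mathlib

section
/- Let G be a group with elements σ_1, …, σ_{n-1} satisfying the braid relations, and let σ = σ_1 σ_2 ⋯ σ_{n-1}. Then σ^n = (σ σ_1)^{n-1}. -/
/-!
Right multiplication by `σ = σ_1 ⋯ σ_{n-1}` shifts the generators, `σ σ_i = σ_{i+1} σ`, so
`σ^k σ_1 = σ_{k+1} σ^k`. Feeding this into `(σ σ_1)^k` one factor at a time gives
`σ_1 (σ σ_1)^k = (σ_1 ⋯ σ_{k+1}) σ^k`; at `k = n - 2` the partial product is `σ` itself, so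
`(σ σ_1)^{n-1} = σ · σ_1 (σ σ_1)^{n-2} = σ · σ · σ^{n-2}`.
-/

/-- The ordered product `σ = σ_1 σ_2 ⋯ σ_{n-1}` of the braid generators. -/
def braidProd {G : Type*} [Group G] (s : ℕ → G) (n : ℕ) : G :=
  ((List.range (n - 1)).map fun k => s (k + 1)).prod

/-- The Garside fundamental element `Δ = Π_{n-1} Π_{n-2} ⋯ Π_1`, where
`Π_t = σ_1 σ_2 ⋯ σ_t`. -/
def garside {G : Type*} [Group G] (s : ℕ → G) (n : ℕ) : G :=
  ((List.range (n - 1)).map fun k =>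
    ((List.range (n - 1 - k)).map fun j => s (j + 1)).prod).prod

namespace Braid

variable {G : Type*} [Group G]

def braidPi (s : ℕ → G) (m : ℕ) : G :=
  ((List.range m).map fun k => s (k + 1)).prod

structure BraidRelations (s : ℕ → G) (N : ℕ) : Prop where
  commute : ∀ i j, 1 ≤ i → i + 1 < j → j ≤ N → Commute (s i) (s j)
  braid : ∀ i, 1 ≤ i → i + 1 ≤ N → s i * s (i + 1) * s i = s (i + 1) * s i * s (i + 1)

variable {s : ℕ → G}

@[simp]
theorem braidPi_zero : braidPi s 0 = 1 := rfl

theorem braidPi_succ (m : ℕ) : braidPi s (m + 1) = braidPi s m * s (m + 1) := by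
  simp [braidPi, List.range_succ]

theorem braidProd_eq_braidPi (n : ℕ) : braidProd s n = braidPi s (n - 1) := rfl

section Shift

variable {σ : G} {N : ℕ} (hσ : ∀ i, 1 ≤ i → i + 1 ≤ N → σ * s i = s (i + 1) * σ)
include hσ

theorem pow_mul_gen {i k : ℕ} (hi : 1 ≤ i) (hikN : i + k ≤ N) :
    σ ^ k * s i = s (i + k) * σ ^ k := by
  induction k with
  | zero => simp
  | succ k ih =>
    rw [pow_succ', mul_assoc, ih (by omega), ← mul_assoc, hσ _ (by omega) (by omega),
      mul_assoc, ← pow_succ', ← add_assoc]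

theorem gen_one_mul_pow_mul_gen_one {k : ℕ} (hkN : k + 1 ≤ N) :
    s 1 * (σ * s 1) ^ k = braidPi s (k + 1) * σ ^ k := by
  induction k with
  | zero => simp [braidPi_succ]
  | succ k ih =>
    calc s 1 * (σ * s 1) ^ (k + 1) = s 1 * (σ * s 1) ^ k * σ * s 1 := by
          simp only [pow_succ, mul_assoc]
      _ = braidPi s (k + 1) * (σ ^ (k + 1) * s 1) := by
          rw [ih (by omega), mul_assoc, mul_assoc, ← mul_assoc (σ ^ k), ← pow_succ]
      _ = braidPi s (k + 2) * σ ^ (k + 1) := by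
          rw [pow_mul_gen hσ le_rfl (by omega), braidPi_succ (k + 1), add_comm 1, mul_assoc]

end Shift

section Relations

variable {N : ℕ} (h : BraidRelations s N)
include h

theorem commute_braidPi {m j : ℕ} (hmj : m + 1 < j) (hjN : j ≤ N) :
    Commute (braidPi s m) (s j) := by
  induction m with
  | zero => exact Commute.one_left _
  | succ m ih =>
    rw [braidPi_succ]
    exact (ih (by omega)).mul_left (h.commute _ _ (by omega) hmj hjN)

theorem braidPi_succ_mul_gen {i : ℕ} (hi : 1 ≤ i) (hiN : i + 1 ≤ N) :
    braidPi s (i + 1) * s i = s (i + 1) * braidPi s (i + 1) := by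
  obtain ⟨t, rfl⟩ : ∃ t, i = t + 1 := ⟨i - 1, by omega⟩
  have hfar : braidPi s t * s (t + 2) = s (t + 2) * braidPi s t :=
    commute_braidPi h (by omega) hiN
  calc braidPi s (t + 2) * s (t + 1)
      = braidPi s t * (s (t + 1) * s (t + 2) * s (t + 1)) := by
        simp only [braidPi_succ, mul_assoc]
    _ = braidPi s t * s (t + 2) * (s (t + 1) * s (t + 2)) := by
        rw [h.braid _ hi hiN]; simp only [mul_assoc]
    _ = s (t + 2) * braidPi s (t + 2) := by
        rw [hfar]; simp only [braidPi_succ, mul_assoc]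

theorem braidPi_mul_gen {m i : ℕ} (hi : 1 ≤ i) (him : i + 1 ≤ m) (hmN : m ≤ N) :
    braidPi s m * s i = s (i + 1) * braidPi s m := by
  induction m, him using Nat.le_induction with
  | base => exact braidPi_succ_mul_gen h hi hmN
  | succ m him ih =>
    have hfar : s i * s (m + 1) = s (m + 1) * s i := h.commute _ _ hi (by omega) hmN
    rw [braidPi_succ, mul_assoc, ← hfar, ← mul_assoc, ih (by omega), mul_assoc]

theorem braidPi_pow_succ : braidPi s N ^ (N + 1) = (braidPi s N * s 1) ^ N := by
  cases N with
  | zero => simp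
  | succ k =>
    have hshift : ∀ i, 1 ≤ i → i + 1 ≤ k + 1 →
        braidPi s (k + 1) * s i = s (i + 1) * braidPi s (k + 1) :=
      fun i hi hik => braidPi_mul_gen h hi hik le_rfl
    symm
    rw [pow_succ', mul_assoc, gen_one_mul_pow_mul_gen_one hshift le_rfl, ← pow_succ',
      ← pow_succ']

end Relations

end Braid

theorem braid_sigma_pow_n_general {G : Type*} [Group G] (n : ℕ) (s : ℕ → G)
    (hcomm : ∀ i j, 1 ≤ i → i + 1 < j → j ≤ n - 1 → s i * s j = s j * s i)
    (hbraid : ∀ i, 1 ≤ i → i + 1 ≤ n - 1 →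
      s i * s (i + 1) * s i = s (i + 1) * s i * s (i + 1)) :
    braidProd s n ^ n = (braidProd s n * s 1) ^ (n - 1) := by
  have key := Braid.braidPi_pow_succ (N := n - 1) ⟨hcomm, hbraid⟩
  rcases n with _ | n
  · simp
  · simpa [Braid.braidProd_eq_braidPi] using key

/-- if σ_1, …, σ_{n-1} satisfy the braid relations and σ = σ_1⋯σ_{n-1},
then σ^n = (σ σ_1)^{n-1}. -/
theorem braid_sigma_pow_n {G : Type*} [Group G] (n : ℕ) (hn : 2 ≤ n) (s : ℕ → G)
    (hcomm : ∀ i j, 1 ≤ i → i + 1 < j → j ≤ n - 1 → s i * s j = s j * s i)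
    (hbraid : ∀ i, 1 ≤ i → i + 1 ≤ n - 1 →
      s i * s (i + 1) * s i = s (i + 1) * s i * s (i + 1)) :
    braidProd s n ^ n = (braidProd s n * s 1) ^ (n - 1) :=
  braid_sigma_pow_n_general n s hcomm hbraid
end

section
/- Let G be a group with elements σ_1, …, σ_{n-1} satisfying the braid relations, and set σ = σ_1⋯σ_{n-1}. Then the sphere relation σ_1 σ_2 ⋯ σ_{n-2} σ_{n-1}² σ_{n-2} ⋯ σ_2 σ_1 = 1 is equivalent to σ^n (σ_1^{-1} σ)^{1-n} = 1. -/
/-!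
Write `σ = σ_1 τ` with `τ = σ_2 ⋯ σ_{n-1}`. The braid relations give `σ σ_i = σ_{i+1} σ` for
`i ≤ n - 2`, so pushing `σ` through `σ_k ⋯ σ_1` shows inductively that
`σ^k = (σ_k ⋯ σ_1) τ^k` for `k ≤ n - 1`. One more factor `σ = σ_1 ⋯ σ_{n-1}` turns this into
`σ^n = W τ^{n-1}`, where `W` is the sphere word; hence `W = σ^n (σ_1⁻¹ σ)^{1-n}`.
-/

section Products

variable {G : Type*} [Group G] (s : ℕ → G)

def ascProd (a m : ℕ) : G := ((List.range' a m).map s).prod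

def descProd (a m : ℕ) : G := ((List.range' a m).reverse.map s).prod

theorem ascProd_add (a m k : ℕ) :
    ascProd s a (m + k) = ascProd s a m * ascProd s (a + m) k := by
  simp only [ascProd, ← List.range'_append_1, List.map_append, List.prod_append]

theorem ascProd_succ (a m : ℕ) : ascProd s a (m + 1) = ascProd s a m * s (a + m) := by
  simp only [ascProd, List.range'_1_concat, List.map_append, List.prod_append, List.map_cons,
    List.map_nil, List.prod_cons, List.prod_nil, mul_one]

theorem ascProd_succ' (a m : ℕ) : ascProd s a (m + 1) = s a * ascProd s (a + 1) m := by
  simp only [ascProd, List.range'_succ, List.map_cons, List.prod_cons]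

theorem descProd_succ (a m : ℕ) : descProd s a (m + 1) = s (a + m) * descProd s a m := by
  simp only [descProd, List.range'_1_concat, List.reverse_append, List.map_append,
    List.prod_append, List.reverse_cons, List.reverse_nil, List.nil_append, List.map_cons,
    List.map_nil, List.prod_cons, List.prod_nil, mul_one]

theorem descProd_succ' (a m : ℕ) : descProd s a (m + 1) = descProd s (a + 1) m * s a := by
  simp only [descProd, List.range'_succ, List.reverse_cons, List.map_append, List.prod_append,
    List.map_cons, List.map_nil, List.prod_cons, List.prod_nil, mul_one]

theorem ascProd_one_eq_mul_ascProd_two {n : ℕ} (hn : 2 ≤ n) :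
    ascProd s 1 (n - 1) = s 1 * ascProd s 2 (n - 2) := by
  rw [show n - 1 = n - 2 + 1 by omega, ascProd_succ']

end Products

structure IsBraidFamily {G : Type*} [Group G] (s : ℕ → G) (n : ℕ) : Prop where
  comm : ∀ i j, 1 ≤ i → i + 1 < j → j ≤ n - 1 → s i * s j = s j * s i
  braid : ∀ i, 1 ≤ i → i + 1 ≤ n - 1 → s i * s (i + 1) * s i = s (i + 1) * s i * s (i + 1)

namespace IsBraidFamily

variable {G : Type*} [Group G] {s : ℕ → G} {n : ℕ}

theorem commute_ascProd_of_add_two_le (h : IsBraidFamily s n) {i a m : ℕ} (hi : 1 ≤ i)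
    (hia : i + 2 ≤ a) (ham : a + m ≤ n) : Commute (s i) (ascProd s a m) := by
  refine Commute.list_prod_right _ _ fun x hx => ?_
  obtain ⟨j, hj, rfl⟩ := List.mem_map.1 hx
  rw [List.mem_range'_1] at hj
  exact h.comm i j hi (by omega) (by omega)

theorem commute_ascProd_of_add_le (h : IsBraidFamily s n) {i a m : ℕ} (ha : 1 ≤ a)
    (hai : a + m + 1 ≤ i) (hi : i ≤ n - 1) : Commute (s i) (ascProd s a m) := by
  refine Commute.list_prod_right _ _ fun x hx => ?_
  obtain ⟨j, hj, rfl⟩ := List.mem_map.1 hx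
  rw [List.mem_range'_1] at hj
  exact (h.comm j i (by omega) (by omega) hi).symm

theorem ascProd_mul_eq_mul_ascProd (h : IsBraidFamily s n) {p : ℕ} (hp : p + 2 ≤ n - 1) :
    ascProd s 1 (n - 1) * s (p + 1) = s (p + 2) * ascProd s 1 (n - 1) := by
  obtain ⟨q, hq⟩ : ∃ q, n - 1 = p + 2 + q := ⟨n - 1 - (p + 2), by omega⟩
  have hsplit : ascProd s 1 (n - 1) =
      ascProd s 1 p * (s (p + 1) * s (p + 2)) * ascProd s (p + 3) q := by
    have hpair : ascProd s (1 + p) 2 = s (p + 1) * s (p + 2) := by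
      simp only [ascProd, List.range'_succ, List.range'_zero, List.map_cons, List.map_nil,
        List.prod_cons, List.prod_nil, mul_one, add_comm 1 p]
    rw [hq, ascProd_add, ascProd_add, hpair, show 1 + (p + 2) = p + 3 by omega]
  have hA : Commute (s (p + 2)) (ascProd s 1 p) :=
    h.commute_ascProd_of_add_le le_rfl (by omega) hp
  have hB : Commute (s (p + 1)) (ascProd s (p + 3) q) :=
    h.commute_ascProd_of_add_two_le (by omega) (by omega) (by omega)
  have hbraid := h.braid (p + 1) (by omega) (by omega)
  rw [hsplit]
  calc ascProd s 1 p * (s (p + 1) * s (p + 2)) * ascProd s (p + 3) q * s (p + 1)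
      = ascProd s 1 p * (s (p + 1) * s (p + 2) * s (p + 1)) * ascProd s (p + 3) q := by
        simp only [mul_assoc, hB.symm.eq]
    _ = ascProd s 1 p * (s (p + 2) * s (p + 1) * s (p + 2)) * ascProd s (p + 3) q := by
        rw [hbraid]
    _ = s (p + 2) * (ascProd s 1 p * (s (p + 1) * s (p + 2)) * ascProd s (p + 3) q) := by
        simp only [← mul_assoc, hA.symm.eq]

theorem ascProd_mul_descProd (h : IsBraidFamily s n) {k : ℕ} (hk : k ≤ n - 2) :
    ascProd s 1 (n - 1) * descProd s 1 k = descProd s 2 k * ascProd s 1 (n - 1) := by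
  induction k with
  | zero => simp [descProd]
  | succ k ih =>
    rw [descProd_succ, descProd_succ, ← mul_assoc, add_comm 1 k,
      h.ascProd_mul_eq_mul_ascProd (p := k) (by omega), mul_assoc, ih (by omega), ← mul_assoc,
      add_comm k 2]

theorem ascProd_pow (h : IsBraidFamily s n) {k : ℕ} (hk : k ≤ n - 1) :
    ascProd s 1 (n - 1) ^ k = descProd s 1 k * ascProd s 2 (n - 2) ^ k := by
  induction k with
  | zero => simp [descProd]
  | succ k ih =>
    calc ascProd s 1 (n - 1) ^ (k + 1)
        = ascProd s 1 (n - 1) * descProd s 1 k * ascProd s 2 (n - 2) ^ k := by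
          rw [pow_succ', ih (by omega), mul_assoc]
      _ = descProd s 2 k * s 1 * ascProd s 2 (n - 2) ^ (k + 1) := by
          rw [h.ascProd_mul_descProd (by omega), ascProd_one_eq_mul_ascProd_two s (by omega),
            pow_succ']; simp only [mul_assoc]
      _ = descProd s 1 (k + 1) * ascProd s 2 (n - 2) ^ (k + 1) := by
          rw [descProd_succ']

theorem ascProd_pow_eq_sphere_mul (h : IsBraidFamily s n) (hn : 2 ≤ n) :
    ascProd s 1 (n - 1) ^ n =
      ascProd s 1 (n - 2) * s (n - 1) ^ 2 * descProd s 1 (n - 2) *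
        ascProd s 2 (n - 2) ^ (n - 1) := by
  have hn1 : n - 1 = n - 2 + 1 := by omega
  have hasc : ascProd s 1 (n - 1) = ascProd s 1 (n - 2) * s (n - 1) := by
    conv_lhs => rw [hn1, ascProd_succ, add_comm, ← hn1]
  have hdesc : descProd s 1 (n - 1) = s (n - 1) * descProd s 1 (n - 2) := by
    conv_lhs => rw [hn1, descProd_succ, add_comm, ← hn1]
  calc ascProd s 1 (n - 1) ^ n
      = ascProd s 1 (n - 1) * descProd s 1 (n - 1) * ascProd s 2 (n - 2) ^ (n - 1) := by
        rw [mul_assoc, ← h.ascProd_pow le_rfl, ← pow_succ', Nat.sub_add_cancel (by omega)]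
    _ = _ := by
        rw [hasc, hdesc, sq]
        simp only [mul_assoc]

end IsBraidFamily

/-- the sphere relation σ_1⋯σ_{n-2} σ_{n-1}² σ_{n-2}⋯σ_1 = 1 is
equivalent to σ^n (σ_1^{-1} σ)^{1-n} = 1, where σ = σ_1⋯σ_{n-1}. -/
theorem sphere_relation_equiv {G : Type*} [Group G] (n : ℕ) (hn : 3 ≤ n) (s : ℕ → G)
    (hcomm : ∀ i j, 1 ≤ i → i + 1 < j → j ≤ n - 1 → s i * s j = s j * s i)
    (hbraid : ∀ i, 1 ≤ i → i + 1 ≤ n - 1 →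
      s i * s (i + 1) * s i = s (i + 1) * s i * s (i + 1)) :
    (((List.range (n - 2)).map fun k => s (k + 1)).prod * s (n - 1) ^ 2 *
        ((List.range (n - 2)).map fun k => s (n - 2 - k)).prod = 1) ↔
      braidProd s n ^ n * ((s 1)⁻¹ * braidProd s n) ^ ((1 : ℤ) - n) = 1 := by
  have h : IsBraidFamily s n := ⟨hcomm, hbraid⟩
  have hasc : ∀ m, ((List.range m).map fun k => s (k + 1)).prod = ascProd s 1 m := fun m => by
    simp only [ascProd, List.range'_eq_map_range, List.map_map, Function.comp_def, add_comm 1]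
  have hdesc :
      ((List.range (n - 2)).map fun k => s (n - 2 - k)).prod = descProd s 1 (n - 2) := by
    rw [descProd, List.reverse_range', List.map_map]
    congr 2
    funext k
    simp only [Function.comp_apply]
    exact congrArg s (by omega)
  have hτ : (s 1)⁻¹ * ascProd s 1 (n - 1) = ascProd s 2 (n - 2) := by
    rw [ascProd_one_eq_mul_ascProd_two s (by omega), inv_mul_cancel_left]
  have hzpow : ((1 : ℤ) - n) = -((n - 1 : ℕ) : ℤ) := by omega
  rw [hasc, hdesc, braidProd, hasc, hτ, hzpow, zpow_neg, zpow_natCast,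
    h.ascProd_pow_eq_sphere_mul (by omega), mul_inv_cancel_right]
end

section
/- In the braid group B_n (presented by generators σ_1,…,σ_{n-1} and the braid relations), the elements s_{i,j} = σ_{j-1}⋯σ_{i+1} σ_i² σ_{i+1}^{-1}⋯σ_{j-1}^{-1} for 1 ≤ i < j ≤ n satisfy the Burau relations: (a) s_{i,j} s_{k,l} = s_{k,l} s_{i,j} for i < j < k < l and for i < k < l < j; (b) s_{i,j} s_{i,k} s_{j,k} = s_{i,k} s_{j,k} s_{i,j} for i < j < k; (c) s_{i,k} s_{j,k} s_{i,j} = s_{j,k} s_{i,j} s_{i,k} for i < j < k; (d) s_{i,k} s_{j,k} s_{j,l} s_{j,k}^{-1} = s_{j,k} s_{j,l} s_{j,k}^{-1} s_{i,k} for i < j < k < l. -/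
/-- The element s_{i,j} = σ_{j-1}⋯σ_{i+1} σ_i² σ_{i+1}^{-1}⋯σ_{j-1}^{-1}. -/
def burau {G : Type*} [Group G] (s : ℕ → G) (i j : ℕ) : G :=
  ((List.range (j - 1 - i)).map fun k => s (j - 1 - k)).prod * s i ^ 2 *
    (((List.range (j - 1 - i)).map fun k => s (j - 1 - k)).prod)⁻¹

/-!
Every Burau relation is a commutation `Commute x y` between words in the `s_{a,b}`.
Conjugation by `σ_k` sends `s_{a,k}` to `s_{a,k+1}` and fixes `s_{a,b}` for `b < k`, so it raises
the largest index occurring in a relation by one. This reduces each relation to the case where the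
largest index is one more than the second largest. These cases are proved by a second induction,
conjugating by `σ_k σ_{k+1}`: by the braid relation it sends `σ_k` to `σ_{k+1}`, and it sends
`s_{a,k}` to `s_{a,k+1}`. What remains are identities between two generators with `p q p = q p q`.
-/

theorem MulAut.conj_conj {G : Type*} [Group G] (g h x : G) :
    MulAut.conj g (MulAut.conj h x) = MulAut.conj (MulAut.conj g h) (MulAut.conj g x) := by
  simp only [MulAut.conj_apply]; group

section BraidPair
variable {G : Type*} [Group G] {p q : G}

theorem conj_mul_of_braid (h : p * q * p = q * p * q) : MulAut.conj (p * q) p = q := by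
  rw [MulAut.conj_apply, h]; group

theorem commute_sq_of_braid (h : p * q * p = q * p * q) : Commute (p ^ 2) (q * p ^ 2 * q) := by
  have hp : Commute p (q * p ^ 2 * q) :=
    calc p * (q * p ^ 2 * q) = p * q * p * (p * q) := by simp only [sq, mul_assoc]
      _ = q * p * (q * p * q) := by rw [h]; simp only [mul_assoc]
      _ = q * p * (p * q * p) := by rw [h]
      _ = q * p ^ 2 * q * p := by simp only [sq, mul_assoc]
  exact hp.pow_left 2

theorem conj_sq_conj_sq_of_braid (h : p * q * p = q * p * q) :
    MulAut.conj (p ^ 2) (MulAut.conj q (p ^ 2)) = MulAut.conj p (q ^ 2) := by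
  have hq : q ^ 2 = MulAut.conj (p * q) (p ^ 2) := by rw [map_pow, conj_mul_of_braid h]
  rw [hq]
  simp only [MulAut.conj_apply, sq, mul_inv_rev, mul_assoc]

end BraidPair

section Burau
variable {G : Type*} [Group G] (s : ℕ → G)

theorem burau_succ_self (i : ℕ) : burau s i (i + 1) = s i ^ 2 := by
  simp [burau]

theorem burau_succ {i m : ℕ} (h : i < m) :
    burau s i (m + 1) = MulAut.conj (s m) (burau s i m) := by
  have hlen : m + 1 - 1 - i = (m - 1 - i) + 1 := by omega
  have hword : (List.range (m + 1 - 1 - i)).map (fun k => s (m + 1 - 1 - k)) =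
      s m :: (List.range (m - 1 - i)).map (fun k => s (m - 1 - k)) := by
    rw [hlen, List.range_succ_eq_map, List.map_cons, List.map_map]
    congr 1
    exact List.map_congr_left fun k _ => congrArg s (by omega)
  rw [burau, burau, hword, List.prod_cons, MulAut.conj_apply]
  group

variable {s} in
theorem commute_burau_of_forall {x : G} {i j : ℕ} (hij : i < j)
    (h : ∀ u, i ≤ u → u < j → Commute x (s u)) : Commute x (burau s i j) := by
  induction j, hij using Nat.le_induction with
  | base => rw [burau_succ_self]; exact (h i le_rfl (by omega)).pow_right 2
  | succ j hij ih =>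
    have hj := h j (by omega) (by omega)
    rw [burau_succ s hij, MulAut.conj_apply]
    exact (hj.mul_right (ih fun u hu hu' => h u hu (by omega))).mul_right hj.inv_right

end Burau

structure BraidRelations {G : Type*} [Group G] (s : ℕ → G) (n : ℕ) : Prop where
  commute : ∀ i j, 1 ≤ i → i + 1 < j → j ≤ n - 1 → Commute (s i) (s j)
  braid : ∀ i, 1 ≤ i → i + 1 ≤ n - 1 → s i * s (i + 1) * s i = s (i + 1) * s i * s (i + 1)

namespace BraidRelations
variable {G : Type*} [Group G] {s : ℕ → G} {n : ℕ}

theorem commute_burau (hs : BraidRelations s n) {t k l : ℕ} (ht : 1 ≤ t) (ht' : t ≤ n - 1)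
    (hk : 1 ≤ k) (hkl : k < l) (hl : l ≤ n) (hfar : t + 1 < k ∨ l < t) :
    Commute (s t) (burau s k l) :=
  commute_burau_of_forall hkl fun u hu hu' => hfar.elim
    (fun h => hs.commute t u ht (by omega) (by omega))
    (fun h => (hs.commute u t (by omega) (by omega) ht').symm)

theorem conj_burau_of_lt (hs : BraidRelations s n) {i j k : ℕ} (hi : 1 ≤ i) (hij : i < j)
    (hjk : j < k) (hk : k ≤ n - 1) : MulAut.conj (s k) (burau s i j) = burau s i j := by
  rw [MulAut.conj_apply]
  exact (hs.commute_burau (by omega) hk hi hij (by omega) (Or.inr hjk)).mul_inv_cancel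

theorem conj_mul_succ_self (hs : BraidRelations s n) {k : ℕ} (hk : 1 ≤ k)
    (hk' : k + 1 ≤ n - 1) : MulAut.conj (s k * s (k + 1)) (s k) = s (k + 1) :=
  conj_mul_of_braid (hs.braid k hk hk')

theorem conj_mul_succ_burau (hs : BraidRelations s n) {i k : ℕ} (hi : 1 ≤ i) (hik : i < k)
    (hk : k + 1 ≤ n - 1) : MulAut.conj (s k * s (k + 1)) (burau s i k) = burau s i (k + 1) := by
  rw [map_mul, MulAut.mul_apply, hs.conj_burau_of_lt hi hik (by omega) hk, burau_succ s hik]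

theorem conj_mul_succ_burau_succ (hs : BraidRelations s n) {i k : ℕ} (hi : 1 ≤ i) (hik : i < k)
    (hk : k + 1 ≤ n - 1) :
    MulAut.conj (s k * s (k + 1)) (burau s i (k + 1)) = burau s i (k + 2) := by
  rw [burau_succ s hik, MulAut.conj_conj, hs.conj_mul_succ_self (by omega) hk,
    hs.conj_mul_succ_burau hi hik hk, ← burau_succ s (by omega)]

theorem commute_burau_mul_self_mul (hs : BraidRelations s n) {i m : ℕ} (hi : 1 ≤ i)
    (him : i < m) (hm : m ≤ n - 1) : Commute (burau s i m) (s m * burau s i m * s m) := by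
  induction m, him using Nat.le_induction with
  | base => rw [burau_succ_self]; exact commute_sq_of_braid (hs.braid i hi hm)
  | succ m him ih =>
    have h := (ih (by omega)).map (MulAut.conj (s m * s (m + 1)))
    rwa [map_mul (MulAut.conj _), map_mul (MulAut.conj _), hs.conj_mul_succ_burau hi him hm,
      hs.conj_mul_succ_self (by omega) hm] at h

theorem commute_burau_burau_mul_burau (hs : BraidRelations s n) {i j k : ℕ} (hi : 1 ≤ i)
    (hij : i < j) (hjk : j < k) (hk : k ≤ n) :
    Commute (burau s i j) (burau s i k * burau s j k) := by
  induction k, hjk using Nat.le_induction with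
  | base =>
    have h : MulAut.conj (s j) (burau s i j) * s j ^ 2 = s j * burau s i j * s j := by
      rw [MulAut.conj_apply]; group
    rw [burau_succ s hij, burau_succ_self, h]
    exact hs.commute_burau_mul_self_mul hi hij (by omega)
  | succ k hjk ih =>
    have h := (ih (by omega)).map (MulAut.conj (s k))
    rwa [map_mul (MulAut.conj _), hs.conj_burau_of_lt hi hij hjk (by omega),
      ← burau_succ s (by omega), ← burau_succ s hjk] at h

theorem commute_burau_burau_mul_burau' (hs : BraidRelations s n) {i j k : ℕ} (hi : 1 ≤ i)
    (hij : i < j) (hjk : j < k) (hk : k ≤ n) :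
    Commute (burau s i k) (burau s j k * burau s i j) := by
  induction k, hjk using Nat.le_induction with
  | base =>
    have h := (hs.commute_burau_mul_self_mul hi hij (by omega)).map (MulAut.conj (s j))
    have h' : MulAut.conj (s j) (s j * burau s i j * s j) = s j ^ 2 * burau s i j := by
      simp [sq, mul_assoc]
    rwa [h', ← burau_succ s hij, ← burau_succ_self] at h
  | succ k hjk ih =>
    have h := (ih (by omega)).map (MulAut.conj (s k))
    rwa [map_mul (MulAut.conj _), hs.conj_burau_of_lt hi hij hjk (by omega),
      ← burau_succ s (by omega), ← burau_succ s hjk] at h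

theorem commute_burau_conj_burau_succ (hs : BraidRelations s n) {i j k : ℕ} (hi : 1 ≤ i)
    (hij : i < j) (hjk : j < k) (hk : k ≤ n - 1) :
    Commute (burau s i k) (MulAut.conj (burau s j k) (burau s j (k + 1))) := by
  induction k, hjk using Nat.le_induction with
  | base =>
    have hsq : Commute (burau s i j) (s (j + 1) ^ 2) :=
      ((hs.commute_burau (by omega) hk hi hij (by omega) (Or.inr (by omega))).pow_left 2).symm
    rw [burau_succ s hij, burau_succ s (Nat.lt_succ_self j), burau_succ_self,
      conj_sq_conj_sq_of_braid (hs.braid j (by omega) hk)]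
    exact hsq.map (MulAut.conj (s j))
  | succ k hjk ih =>
    have h := (ih (by omega)).map (MulAut.conj (s k * s (k + 1)))
    rwa [MulAut.conj_conj, hs.conj_mul_succ_burau hi (by omega) hk,
      hs.conj_mul_succ_burau (by omega) hjk hk, hs.conj_mul_succ_burau_succ (by omega) hjk hk] at h

theorem commute_burau_conj_burau (hs : BraidRelations s n) {i j k l : ℕ} (hi : 1 ≤ i)
    (hij : i < j) (hjk : j < k) (hkl : k < l) (hl : l ≤ n) :
    Commute (burau s i k) (MulAut.conj (burau s j k) (burau s j l)) := by
  induction l, hkl using Nat.le_induction with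
  | base => exact hs.commute_burau_conj_burau_succ hi hij hjk (by omega)
  | succ l hkl ih =>
    have h := (ih (by omega)).map (MulAut.conj (s l))
    rwa [MulAut.conj_conj, hs.conj_burau_of_lt hi (by omega) hkl (by omega),
      hs.conj_burau_of_lt (by omega) hjk hkl (by omega), ← burau_succ s (by omega)] at h

theorem commute_burau_burau_of_disjoint (hs : BraidRelations s n) {i j k l : ℕ} (hi : 1 ≤ i)
    (hij : i < j) (hjk : j < k) (hkl : k < l) (hl : l ≤ n) :
    Commute (burau s i j) (burau s k l) :=
  (commute_burau_of_forall hij fun u hu hu' =>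
    (hs.commute_burau (by omega) (by omega) (by omega) hkl hl (Or.inl (by omega))).symm).symm

theorem commute_burau_succ_burau (hs : BraidRelations s n) {i k l : ℕ} (hi : 1 ≤ i)
    (hik : i < k) (hkl : k < l) (hl : l ≤ n - 1) :
    Commute (burau s i (l + 1)) (burau s k l) := by
  induction l, hkl using Nat.le_induction with
  | base =>
    have hb := conj_mul_of_braid (hs.braid k (by omega) hl).symm
    have h := ((hs.commute_burau (by omega) hl hi hik (by omega)
      (Or.inr (by omega))).pow_left 2).symm.map (MulAut.conj (s (k + 1) * s k))
    rwa [map_pow, hb, map_mul, MulAut.mul_apply, ← burau_succ s hik,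
      ← burau_succ s (by omega), ← burau_succ_self] at h
  | succ l hkl ih =>
    have h := (ih (by omega)).map (MulAut.conj (s l * s (l + 1)))
    rwa [hs.conj_mul_succ_burau_succ hi (by omega) hl,
      hs.conj_mul_succ_burau (by omega) hkl hl] at h

theorem commute_burau_burau_of_nested (hs : BraidRelations s n) {i j k l : ℕ} (hi : 1 ≤ i)
    (hik : i < k) (hkl : k < l) (hlj : l < j) (hj : j ≤ n) :
    Commute (burau s i j) (burau s k l) := by
  induction j, hlj using Nat.le_induction with
  | base => exact hs.commute_burau_succ_burau hi hik hkl (by omega)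
  | succ j hlj ih =>
    have h := (ih (by omega)).map (MulAut.conj (s j))
    rwa [hs.conj_burau_of_lt (by omega) hkl hlj (by omega), ← burau_succ s (by omega)] at h

end BraidRelations

theorem burau_relations_general {G : Type*} [Group G] (n : ℕ) (s : ℕ → G)
    (hcomm : ∀ i j, 1 ≤ i → i + 1 < j → j ≤ n - 1 → s i * s j = s j * s i)
    (hbraid : ∀ i, 1 ≤ i → i + 1 ≤ n - 1 →
      s i * s (i + 1) * s i = s (i + 1) * s i * s (i + 1)) :
    (∀ i j k l, 1 ≤ i → i < j → j < k → k < l → l ≤ n →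
      burau s i j * burau s k l = burau s k l * burau s i j) ∧
    (∀ i k l j, 1 ≤ i → i < k → k < l → l < j → j ≤ n →
      burau s i j * burau s k l = burau s k l * burau s i j) ∧
    (∀ i j k, 1 ≤ i → i < j → j < k → k ≤ n →
      burau s i j * burau s i k * burau s j k = burau s i k * burau s j k * burau s i j) ∧
    (∀ i j k, 1 ≤ i → i < j → j < k → k ≤ n →
      burau s i k * burau s j k * burau s i j = burau s j k * burau s i j * burau s i k) ∧
    (∀ i j k l, 1 ≤ i → i < j → j < k → k < l → l ≤ n →
      burau s i k * burau s j k * burau s j l * (burau s j k)⁻¹ =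
        burau s j k * burau s j l * (burau s j k)⁻¹ * burau s i k) := by
  have hs : BraidRelations s n := ⟨hcomm, hbraid⟩
  refine ⟨fun i j k l hi hij hjk hkl hl => ?_, fun i k l j hi hik hkl hlj hj => ?_,
    fun i j k hi hij hjk hk => ?_, fun i j k hi hij hjk hk => ?_,
    fun i j k l hi hij hjk hkl hl => ?_⟩
  · exact (hs.commute_burau_burau_of_disjoint hi hij hjk hkl hl).eq
  · exact (hs.commute_burau_burau_of_nested hi hik hkl hlj hj).eq
  · simpa only [mul_assoc] using (hs.commute_burau_burau_mul_burau hi hij hjk hk).eq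
  · simpa only [mul_assoc] using (hs.commute_burau_burau_mul_burau' hi hij hjk hk).eq
  · simpa only [MulAut.conj_apply, mul_assoc] using
      (hs.commute_burau_conj_burau hi hij hjk hkl hl).eq

/-- the elements s_{i,j}, 1 ≤ i < j ≤ n, built from braid generators
satisfy the Burau relations. -/
theorem burau_relations {G : Type*} [Group G] (n : ℕ) (hn : 2 ≤ n) (s : ℕ → G)
    (hcomm : ∀ i j, 1 ≤ i → i + 1 < j → j ≤ n - 1 → s i * s j = s j * s i)
    (hbraid : ∀ i, 1 ≤ i → i + 1 ≤ n - 1 →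
      s i * s (i + 1) * s i = s (i + 1) * s i * s (i + 1)) :
    (∀ i j k l, 1 ≤ i → i < j → j < k → k < l → l ≤ n →
      burau s i j * burau s k l = burau s k l * burau s i j) ∧
    (∀ i k l j, 1 ≤ i → i < k → k < l → l < j → j ≤ n →
      burau s i j * burau s k l = burau s k l * burau s i j) ∧
    (∀ i j k, 1 ≤ i → i < j → j < k → k ≤ n →
      burau s i j * burau s i k * burau s j k = burau s i k * burau s j k * burau s i j) ∧
    (∀ i j k, 1 ≤ i → i < j → j < k → k ≤ n →
      burau s i k * burau s j k * burau s i j = burau s j k * burau s i j * burau s i k) ∧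
    (∀ i j k l, 1 ≤ i → i < j → j < k → k < l → l ≤ n →
      burau s i k * burau s j k * burau s j l * (burau s j k)⁻¹ =
        burau s j k * burau s j l * (burau s j k)⁻¹ * burau s i k) :=
  burau_relations_general n s hcomm hbraid
end

section
/- In the monoid P presented by generators σ_1,…,σ_{n-1}, σ_1^{-1},…,σ_{n-1}^{-1}, ε with the inverse braid monoid relations (σ_iσ_i^{-1} = σ_i^{-1}σ_i = 1; εσ_i = σ_iε for i ≥ 2; εσ_1ε = σ_1εσ_1ε = εσ_1εσ_1; ε = ε² = εσ_1² = σ_1²ε) together with the braid relations, define ε_1 = ε and ε_{i+1} = σ_i ε_i σ_i^{-1}. Then the following hold for all valid indices: ε_jσ_i = σ_iε_j for j ≠ i, i+1; ε_iσ_i = σ_iε_{i+1}; ε_{i+1}σ_i = σ_iε_i; ε_i² = ε_i; ε_{i+1}σ_i² = σ_i²ε_{i+1} = ε_{i+1}; and ε_iε_{i+1}σ_i = σ_iε_iε_{i+1} = ε_iε_{i+1}. -/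
/-!
Since `σ_i` is invertible, `ε_{i+1}` is the conjugate of `ε_i` by `σ_i`: `σ_i ε_i = ε_{i+1} σ_i`,
and conjugation by a unit is a monoid endomorphism, so it carries relations to relations.
The commutation `ε_j σ_i = σ_i ε_j` follows by induction on `j`, conjugating by `σ_{j-1}`, or by
`σ_{i+1} σ_i` when `j = i + 2` (braid relation). Then conjugation by `σ_i σ_{i+1}` sends
`(σ_i, ε_i, ε_{i+1})` to `(σ_{i+1}, ε_{i+1}, ε_{i+2})`, so the remaining relations, which at index
`i` are identities in these three elements, propagate from `i = 1`, where they follow from the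
defining relations of `ε`.
-/

open ConjAct

section Monoid

variable {M : Type*} [Monoid M]

theorem SemiconjBy.toConjAct_smul_eq {u : Mˣ} {x y : M} (h : SemiconjBy (u : M) x y) :
    toConjAct u • x = y := by
  rw [units_smul_def, ofConjAct_toConjAct, Units.mul_inv_eq_iff_eq_mul, h.eq]

theorem Commute.of_semiconjBy {a x y x' y' : M} (ha : IsUnit a) (hx : SemiconjBy a x x')
    (hy : SemiconjBy a y y') (h : Commute x y) : Commute x' y' := by
  obtain ⟨u, rfl⟩ := ha
  rw [← hx.toConjAct_smul_eq, ← hy.toConjAct_smul_eq]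
  exact h.map (MulDistribMulAction.toMonoidHom M (toConjAct u))

/-- The relations (2.6) at one index `i`, for `s = σ_i`, `e = ε_i`, `f = ε_{i+1}`. -/
structure EpsRelations (s e f : M) : Prop where
  mul_eq_mul_succ : e * s = s * f
  isIdempotentElem_succ : IsIdempotentElem f
  succ_mul_sq : f * (s * s) = f
  sq_mul_succ : s * s * f = f
  mul_succ_mul : e * f * s = e * f
  mul_mul_succ : s * (e * f) = e * f

namespace EpsRelations

theorem map {N F : Type*} [Monoid N] [FunLike F M N] [MonoidHomClass F M N] (φ : F)
    {s e f : M} (h : EpsRelations s e f) : EpsRelations (φ s) (φ e) (φ f) where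
  mul_eq_mul_succ := by rw [← map_mul, h.mul_eq_mul_succ, map_mul]
  isIdempotentElem_succ := h.isIdempotentElem_succ.map φ
  succ_mul_sq := by rw [← map_mul, ← map_mul, h.succ_mul_sq]
  sq_mul_succ := by rw [← map_mul, ← map_mul, h.sq_mul_succ]
  mul_succ_mul := by rw [← map_mul, ← map_mul, h.mul_succ_mul]
  mul_mul_succ := by rw [← map_mul, ← map_mul, h.mul_mul_succ]

theorem of_semiconjBy {a s e f s' e' f' : M} (ha : IsUnit a) (hs : SemiconjBy a s s')
    (he : SemiconjBy a e e') (hf : SemiconjBy a f f') (h : EpsRelations s e f) :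
    EpsRelations s' e' f' := by
  obtain ⟨u, rfl⟩ := ha
  rw [← hs.toConjAct_smul_eq, ← he.toConjAct_smul_eq, ← hf.toConjAct_smul_eq]
  exact h.map (MulDistribMulAction.toMonoidHom M (toConjAct u))

theorem of_isUnit {s e f : M} (hs : IsUnit s) (hf : SemiconjBy s e f)
    (hses : s * e * s * e = e * s * e) (hese : e * s * e * s = e * s * e)
    (hee : e * e = e) (hess : e * (s * s) = e) (hsse : s * s * e = e) :
    EpsRelations s e f := by
  have hfs : f * s = s * e := hf.eq.symm
  have hef : e * f = e * s * e := hs.mul_right_cancel <| by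
    rw [mul_assoc, hfs, ← mul_assoc, hese]
  refine ⟨hs.mul_right_cancel ?_, hs.mul_right_cancel ?_, hs.mul_right_cancel ?_,
    hs.mul_right_cancel ?_, by rw [hef, hese], by rw [hef]; simpa only [mul_assoc] using hses⟩
  · rw [mul_assoc, hess, mul_assoc, hfs, ← mul_assoc, hsse]
  · rw [mul_assoc, hfs, ← mul_assoc, hfs, mul_assoc, hee]
  · rw [← mul_assoc, hfs, mul_assoc, mul_assoc, hess]
  · calc s * s * f * s = s * (s * s * e) := by rw [mul_assoc, hfs]; simp only [mul_assoc]
      _ = f * s := by rw [hsse, hfs]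

end EpsRelations

theorem semiconjBy_mul_of_braid {a b : M} (h : a * b * a = b * a * b) : SemiconjBy (a * b) a b :=
  h.trans (mul_assoc b a b)

section Braid

variable {n : ℕ} {sig E : ℕ → M}

theorem commute_E_sig (hunit : ∀ i, 1 ≤ i → i ≤ n - 1 → IsUnit (sig i))
    (hsemi : ∀ i, 1 ≤ i → i ≤ n - 1 → SemiconjBy (sig i) (E i) (E (i + 1)))
    (hcomm : ∀ i j, 1 ≤ i → i + 1 < j → j ≤ n - 1 → sig i * sig j = sig j * sig i)
    (hbraid : ∀ i, 1 ≤ i → i + 1 ≤ n - 1 →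
      sig i * sig (i + 1) * sig i = sig (i + 1) * sig i * sig (i + 1))
    (heps : ∀ i, 2 ≤ i → i ≤ n - 1 → Commute (E 1) (sig i)) :
    ∀ j, 1 ≤ j → j ≤ n → ∀ i, 1 ≤ i → i ≤ n - 1 → j ≠ i → j ≠ i + 1 →
      Commute (E j) (sig i) := by
  intro j
  induction j using Nat.strong_induction_on with
  | _ j ih =>
  intro hj hjn i hi hin hji hji'
  obtain rfl | ⟨k, rfl, hk⟩ : j = 1 ∨ ∃ k, j = k + 1 ∧ 1 ≤ k := by
    rcases j with _ | _ | k <;> simp_all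
  · exact heps i (by omega) hin
  obtain rfl | hfar : k = i + 1 ∨ i + 1 < k ∨ k + 1 < i := by omega
  · exact Commute.of_semiconjBy ((hunit (i + 1) hk (by omega)).mul (hunit i hi hin))
      ((hsemi (i + 1) hk (by omega)).mul_left (hsemi i hi hin))
      (semiconjBy_mul_of_braid (hbraid i hi (by omega)).symm)
      (ih i (by omega) hi (by omega) (i + 1) (by omega) (by omega) (by omega) (by omega))
  · have hsig : Commute (sig k) (sig i) := by
      rcases hfar with h | h
      · exact (hcomm i k hi h (by omega)).symm
      · exact hcomm k i hk h hin
    exact Commute.of_semiconjBy (hunit k hk (by omega)) (hsemi k hk (by omega)) hsig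
      (ih k (by omega) hk (by omega) i hi hin (by omega) (by omega))

theorem epsRelations_sig_E (hunit : ∀ i, 1 ≤ i → i ≤ n - 1 → IsUnit (sig i))
    (hsemi : ∀ i, 1 ≤ i → i ≤ n - 1 → SemiconjBy (sig i) (E i) (E (i + 1)))
    (hbraid : ∀ i, 1 ≤ i → i + 1 ≤ n - 1 →
      sig i * sig (i + 1) * sig i = sig (i + 1) * sig i * sig (i + 1))
    (hcommE : ∀ j, 1 ≤ j → j ≤ n → ∀ i, 1 ≤ i → i ≤ n - 1 → j ≠ i → j ≠ i + 1 →
      Commute (E j) (sig i))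
    (h1 : EpsRelations (sig 1) (E 1) (E 2)) :
    ∀ i, 1 ≤ i → i ≤ n - 1 → EpsRelations (sig i) (E i) (E (i + 1)) := by
  intro i hi
  induction i, hi using Nat.le_induction with
  | base => exact fun _ ↦ h1
  | succ i hi ih =>
    intro hin
    refine (ih (by omega)).of_semiconjBy
      ((hunit i hi (by omega)).mul (hunit (i + 1) (by omega) hin))
      (semiconjBy_mul_of_braid (hbraid i hi hin))
      ((hsemi i hi (by omega)).mul_left
        (hcommE i hi (by omega) (i + 1) (by omega) hin (by omega) (by omega)).symm)
      (SemiconjBy.mul_left ?_ (hsemi (i + 1) (by omega) hin))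
    exact (hcommE (i + 2) (by omega) (by omega) i hi (by omega) (by omega) (by omega)).symm

end Braid

end Monoid

theorem inverse_braid_monoid_eps_relations_general {M : Type*} [Monoid M] (n : ℕ)
    (sig sigi : ℕ → M) (eps : M) (E : ℕ → M)
    -- braid relations (2.1)
    (hcomm : ∀ i j, 1 ≤ i → i + 1 < j → j ≤ n - 1 → sig i * sig j = sig j * sig i)
    (hbraid : ∀ i, 1 ≤ i → i + 1 ≤ n - 1 →
      sig i * sig (i + 1) * sig i = sig (i + 1) * sig i * sig (i + 1))
    -- inverse braid monoid relations (2.3)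
    (hinv : ∀ i, 1 ≤ i → i ≤ n - 1 → sig i * sigi i = 1 ∧ sigi i * sig i = 1)
    (hepscomm : ∀ i, 2 ≤ i → i ≤ n - 1 → eps * sig i = sig i * eps)
    (heps1 : sig 1 * eps * sig 1 * eps = eps * sig 1 * eps ∧
      eps * sig 1 * eps * sig 1 = eps * sig 1 * eps)
    (hidem : eps * eps = eps ∧ eps * (sig 1 * sig 1) = eps ∧ sig 1 * sig 1 * eps = eps)
    -- the elements ε_i : ε₁ = ε, ε_{i+1} = σ_i ε_i σ_i⁻¹
    (hE1 : E 1 = eps)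
    (hEsucc : ∀ i, 1 ≤ i → i ≤ n - 1 → E (i + 1) = sig i * E i * sigi i) :
    (∀ i j, 1 ≤ i → i ≤ n - 1 → 1 ≤ j → j ≤ n → j ≠ i → j ≠ i + 1 →
        E j * sig i = sig i * E j) ∧
    (∀ i, 1 ≤ i → i ≤ n - 1 → E i * sig i = sig i * E (i + 1)) ∧
    (∀ i, 1 ≤ i → i ≤ n - 1 → E (i + 1) * sig i = sig i * E i) ∧
    (∀ i, 1 ≤ i → i ≤ n → E i * E i = E i) ∧
    (∀ i, 1 ≤ i → i ≤ n - 1 →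
        E (i + 1) * (sig i * sig i) = E (i + 1) ∧
        sig i * sig i * E (i + 1) = E (i + 1)) ∧
    (∀ i, 1 ≤ i → i ≤ n - 1 →
        E i * E (i + 1) * sig i = E i * E (i + 1) ∧
        sig i * (E i * E (i + 1)) = E i * E (i + 1)) := by
  have hunit (i : ℕ) (hi : 1 ≤ i) (hin : i ≤ n - 1) : IsUnit (sig i) :=
    ⟨⟨sig i, sigi i, (hinv i hi hin).1, (hinv i hi hin).2⟩, rfl⟩
  have hsemi (i : ℕ) (hi : 1 ≤ i) (hin : i ≤ n - 1) : SemiconjBy (sig i) (E i) (E (i + 1)) := by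
    rw [SemiconjBy, hEsucc i hi hin, mul_assoc _ (sigi i), (hinv i hi hin).2, mul_one]
  have hcommE := commute_E_sig hunit hsemi hcomm hbraid fun i hi hin ↦ hE1 ▸ hepscomm i hi hin
  have hrel (i : ℕ) (hi : 1 ≤ i) (hin : i ≤ n - 1) : EpsRelations (sig i) (E i) (E (i + 1)) := by
    refine epsRelations_sig_E hunit hsemi hbraid hcommE ?_ i hi hin
    rw [hE1]
    exact .of_isUnit (hunit 1 le_rfl (by omega)) (hE1 ▸ hsemi 1 le_rfl (by omega)) heps1.1
      heps1.2 hidem.1 hidem.2.1 hidem.2.2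
  refine ⟨fun i j hi hin hj hjn hji hji' ↦ (hcommE j hj hjn i hi hin hji hji').eq,
    fun i hi hin ↦ (hrel i hi hin).mul_eq_mul_succ, fun i hi hin ↦ (hsemi i hi hin).eq.symm,
    fun i hi hin ↦ ?_, fun i hi hin ↦ ⟨(hrel i hi hin).succ_mul_sq, (hrel i hi hin).sq_mul_succ⟩,
    fun i hi hin ↦ ⟨(hrel i hi hin).mul_succ_mul, (hrel i hi hin).mul_mul_succ⟩⟩
  obtain rfl | ⟨k, rfl, hk⟩ : i = 1 ∨ ∃ k, i = k + 1 ∧ 1 ≤ k := by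
    rcases i with _ | _ | k <;> simp_all
  · rw [hE1]
    exact hidem.1
  · exact (hrel k hk (by omega)).isIdempotentElem_succ

/-- in the monoid presented by generators σ_i, σ_i⁻¹, ε and the inverse
braid monoid relations (2.3) together with the braid relations (2.1) (hence in any
monoid whose elements satisfy those relations), the elements ε_i defined by ε₁ = ε and
ε_{i+1} = σ_i ε_i σ_i⁻¹ satisfy the relations (2.6). -/
theorem inverse_braid_monoid_eps_relations {M : Type*} [Monoid M] (n : ℕ) (hn : 2 ≤ n)
    (sig sigi : ℕ → M) (eps : M) (E : ℕ → M)
    -- braid relations (2.1)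
    (hcomm : ∀ i j, 1 ≤ i → i + 1 < j → j ≤ n - 1 → sig i * sig j = sig j * sig i)
    (hbraid : ∀ i, 1 ≤ i → i + 1 ≤ n - 1 →
      sig i * sig (i + 1) * sig i = sig (i + 1) * sig i * sig (i + 1))
    -- inverse braid monoid relations (2.3)
    (hinv : ∀ i, 1 ≤ i → i ≤ n - 1 → sig i * sigi i = 1 ∧ sigi i * sig i = 1)
    (hepscomm : ∀ i, 2 ≤ i → i ≤ n - 1 → eps * sig i = sig i * eps)
    (heps1 : sig 1 * eps * sig 1 * eps = eps * sig 1 * eps ∧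
      eps * sig 1 * eps * sig 1 = eps * sig 1 * eps)
    (hidem : eps * eps = eps ∧ eps * (sig 1 * sig 1) = eps ∧ sig 1 * sig 1 * eps = eps)
    -- the elements ε_i : ε₁ = ε, ε_{i+1} = σ_i ε_i σ_i⁻¹
    (hE1 : E 1 = eps)
    (hEsucc : ∀ i, 1 ≤ i → i ≤ n - 1 → E (i + 1) = sig i * E i * sigi i) :
    (∀ i j, 1 ≤ i → i ≤ n - 1 → 1 ≤ j → j ≤ n → j ≠ i → j ≠ i + 1 →
        E j * sig i = sig i * E j) ∧
    (∀ i, 1 ≤ i → i ≤ n - 1 → E i * sig i = sig i * E (i + 1)) ∧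
    (∀ i, 1 ≤ i → i ≤ n - 1 → E (i + 1) * sig i = sig i * E i) ∧
    (∀ i, 1 ≤ i → i ≤ n → E i * E i = E i) ∧
    (∀ i, 1 ≤ i → i ≤ n - 1 →
        E (i + 1) * (sig i * sig i) = E (i + 1) ∧
        sig i * sig i * E (i + 1) = E (i + 1)) ∧
    (∀ i, 1 ≤ i → i ≤ n - 1 →
        E i * E (i + 1) * sig i = E i * E (i + 1) ∧
        sig i * (E i * E (i + 1)) = E i * E (i + 1)) :=
  inverse_braid_monoid_eps_relations_general n sig sigi eps E hcomm hbraid hinv hepscomm heps1 hidem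
    hE1 hEsucc
end

section
/- In the inverse braid monoid IB_n (presented by σ_i, σ_i^{-1}, ε_i and relations (2.1),(2.6)), the idempotent generators satisfy ε_i Δ = Δ ε_{n+1−i} for all i = 1,…,n, where Δ = (σ_1⋯σ_{n-1})(σ_1⋯σ_{n-2})⋯σ_1 is the Garside element. -/
/-!
Each relation of (2.6) says that `ε_j σ_i = σ_i ε_{s_i j}` with `s_i` the transposition
`(i i+1)`, so `ε_j w = w ε_{π j}` for every positive word `w` in the `σ_i`, where `π` is the
permutation of `w` read left to right. For `Π_t = σ_1 ⋯ σ_t` this is the cycle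
`1 ↦ t+1, j ↦ j-1 (2 ≤ j ≤ t+1)`, and composing the cycles of `Π_{n-1}, …, Π_1` gives the
reversal `j ↦ n+1-j`.
-/

/-- The Garside fundamental element `Δ = Π_{n-1} Π_{n-2} ⋯ Π_1`, where
`Π_t = σ_1 σ_2 ⋯ σ_t`, in a monoid. -/
def garsideM {M : Type*} [Monoid M] (s : ℕ → M) (n : ℕ) : M :=
  ((List.range (n - 1)).map fun k =>
    ((List.range (n - 1 - k)).map fun j => s (j + 1)).prod).prod

open Set

section Intertwines

variable {M : Type*} [Monoid M] (eps : ℕ → M) (n : ℕ)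

def Intertwines (a : M) (f : ℕ → ℕ) : Prop :=
  ∀ j ∈ Icc 1 n, eps j * a = a * eps (f j)

variable {eps n}

theorem Intertwines.mul {a b : M} {f g : ℕ → ℕ} (ha : Intertwines eps n a f)
    (hb : Intertwines eps n b g) (hf : MapsTo f (Icc 1 n) (Icc 1 n)) :
    Intertwines eps n (a * b) (g ∘ f) := by
  intro j hj
  rw [← mul_assoc, ha j hj, mul_assoc, hb (f j) (hf hj), ← mul_assoc, Function.comp_apply]

theorem Intertwines.congr {a : M} {f g : ℕ → ℕ} (ha : Intertwines eps n a f)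
    (hfg : EqOn f g (Icc 1 n)) : Intertwines eps n a g := by
  intro j hj
  rw [ha j hj, hfg hj]

theorem intertwines_swap {s : M} {i : ℕ}
    (hfix : ∀ j ∈ Icc 1 n, j ≠ i → j ≠ i + 1 → eps j * s = s * eps j)
    (hleft : eps i * s = s * eps (i + 1)) (hright : eps (i + 1) * s = s * eps i) :
    Intertwines eps n s (Equiv.swap i (i + 1)) := by
  intro j hj
  rw [Equiv.swap_apply_def]
  split_ifs with h₁ h₂
  · rwa [h₁]
  · rwa [h₂]
  · exact hfix j hj h₁ h₂

end Intertwines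

/-- `Π_t = σ_1 σ_2 ⋯ σ_t`. -/
def sigmaProd {M : Type*} [Monoid M] (sig : ℕ → M) (t : ℕ) : M :=
  ((List.range t).map fun j => sig (j + 1)).prod

theorem sigmaProd_succ {M : Type*} [Monoid M] (sig : ℕ → M) (t : ℕ) :
    sigmaProd sig (t + 1) = sigmaProd sig t * sig (t + 1) := by
  simp [sigmaProd, List.range_succ]

def sigmaProdPerm (t j : ℕ) : ℕ :=
  if j = 1 then t + 1 else if j ≤ t + 1 then j - 1 else j

theorem mapsTo_sigmaProdPerm {n t : ℕ} (ht : t ≤ n - 1) :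
    MapsTo (sigmaProdPerm t) (Icc 1 n) (Icc 1 n) := by
  intro j ⟨hj₁, hj₂⟩
  simp only [sigmaProdPerm, mem_Icc]
  split_ifs <;> omega

/-- The permutation of the prefix `Π_{n-1} ⋯ Π_{n-m}` of `Δ`. -/
def garsidePrefixPerm (n m j : ℕ) : ℕ :=
  if j ≤ m then n + 1 - j else j - m

theorem mapsTo_garsidePrefixPerm (n m : ℕ) :
    MapsTo (garsidePrefixPerm n m) (Icc 1 n) (Icc 1 n) := by
  intro j ⟨hj₁, hj₂⟩
  simp only [garsidePrefixPerm, mem_Icc]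
  split_ifs <;> omega

section Garside

variable {M : Type*} [Monoid M] {sig eps : ℕ → M} {n : ℕ}
  (hsig : ∀ i, 1 ≤ i → i ≤ n - 1 → Intertwines eps n (sig i) (Equiv.swap i (i + 1)))
include hsig

theorem intertwines_sigmaProd {t : ℕ} (ht : t ≤ n - 1) :
    Intertwines eps n (sigmaProd sig t) (sigmaProdPerm t) := by
  induction t with
  | zero =>
    intro j ⟨hj₁, _⟩
    have hfix : sigmaProdPerm 0 j = j := by simp only [sigmaProdPerm]; split_ifs <;> omega
    simp [sigmaProd, hfix]
  | succ t ih =>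
    rw [sigmaProd_succ]
    refine ((ih (by omega)).mul (hsig (t + 1) (by omega) (by omega))
      (mapsTo_sigmaProdPerm (by omega))).congr fun j _ => ?_
    simp only [Function.comp_apply, sigmaProdPerm, Equiv.swap_apply_def]
    split_ifs <;> omega

theorem intertwines_garsidePrefix {m : ℕ} (hm : m ≤ n - 1) :
    Intertwines eps n (((List.range m).map fun k => sigmaProd sig (n - 1 - k)).prod)
      (garsidePrefixPerm n m) := by
  induction m with
  | zero =>
    intro j ⟨hj₁, _⟩
    simp [garsidePrefixPerm, Nat.ne_zero_of_lt hj₁]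
  | succ m ih =>
    rw [List.range_succ, List.map_append, List.prod_append, List.map_singleton,
      List.prod_singleton]
    refine ((ih (by omega)).mul (intertwines_sigmaProd hsig (by omega))
      (mapsTo_garsidePrefixPerm n m)).congr fun j ⟨hj₁, hj₂⟩ => ?_
    simp only [Function.comp_apply, sigmaProdPerm, garsidePrefixPerm]
    split_ifs <;> omega

theorem intertwines_garsideM : Intertwines eps n (garsideM sig n) (fun j => n + 1 - j) :=
  (intertwines_garsidePrefix hsig le_rfl).congr fun j ⟨_, hj⟩ => by
    simp only [garsidePrefixPerm]
    split_ifs <;> omega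

end Garside

theorem eps_garside_commutation_general {M : Type*} [Monoid M] (n : ℕ)
    (sig : ℕ → M) (eps : ℕ → M)
    -- relations (2.6)
    (h₁ : ∀ i j, 1 ≤ i → i ≤ n - 1 → 1 ≤ j → j ≤ n → j ≠ i → j ≠ i + 1 →
      eps j * sig i = sig i * eps j)
    (h₂ : ∀ i, 1 ≤ i → i ≤ n - 1 → eps i * sig i = sig i * eps (i + 1))
    (h₃ : ∀ i, 1 ≤ i → i ≤ n - 1 → eps (i + 1) * sig i = sig i * eps i) :
    ∀ i, 1 ≤ i → i ≤ n → eps i * garsideM sig n = garsideM sig n * eps (n + 1 - i) := by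
  have hsig : ∀ i, 1 ≤ i → i ≤ n - 1 → Intertwines eps n (sig i) (Equiv.swap i (i + 1)) :=
    fun i hi₁ hi₂ => intertwines_swap (fun j hj => h₁ i j hi₁ hi₂ hj.1 hj.2)
      (h₂ i hi₁ hi₂) (h₃ i hi₁ hi₂)
  exact fun i hi₁ hi₂ => intertwines_garsideM hsig i ⟨hi₁, hi₂⟩

/-- in the inverse braid monoid IB_n, presented by generators σ_i, σ_i⁻¹,
ε_i and the relations (2.1), (2.6) (hence in any monoid whose elements satisfy those
relations), the idempotent generators satisfy ε_i Δ = Δ ε_{n+1-i} for i = 1, …, n,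
where Δ is the Garside element. -/
theorem eps_garside_commutation {M : Type*} [Monoid M] (n : ℕ) (hn : 2 ≤ n)
    (sig sigi : ℕ → M) (eps : ℕ → M)
    -- braid relations (2.1)
    (hcomm : ∀ i j, 1 ≤ i → i + 1 < j → j ≤ n - 1 → sig i * sig j = sig j * sig i)
    (hbraid : ∀ i, 1 ≤ i → i + 1 ≤ n - 1 →
      sig i * sig (i + 1) * sig i = sig (i + 1) * sig i * sig (i + 1))
    -- invertibility of the σ_i
    (hinv : ∀ i, 1 ≤ i → i ≤ n - 1 → sig i * sigi i = 1 ∧ sigi i * sig i = 1)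
    -- relations (2.6)
    (h₁ : ∀ i j, 1 ≤ i → i ≤ n - 1 → 1 ≤ j → j ≤ n → j ≠ i → j ≠ i + 1 →
      eps j * sig i = sig i * eps j)
    (h₂ : ∀ i, 1 ≤ i → i ≤ n - 1 → eps i * sig i = sig i * eps (i + 1))
    (h₃ : ∀ i, 1 ≤ i → i ≤ n - 1 → eps (i + 1) * sig i = sig i * eps i)
    (h₄ : ∀ i, 1 ≤ i → i ≤ n → eps i * eps i = eps i)
    (h₅ : ∀ i, 1 ≤ i → i ≤ n - 1 →
      eps (i + 1) * (sig i * sig i) = eps (i + 1) ∧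
      sig i * sig i * eps (i + 1) = eps (i + 1))
    (h₆ : ∀ i, 1 ≤ i → i ≤ n - 1 →
      eps i * eps (i + 1) * sig i = eps i * eps (i + 1) ∧
      sig i * (eps i * eps (i + 1)) = eps i * eps (i + 1)) :
    ∀ i, 1 ≤ i → i ≤ n → eps i * garsideM sig n = garsideM sig n * eps (n + 1 - i) :=
  eps_garside_commutation_general n sig eps h₁ h₂ h₃
end
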